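/- Let M_n, ..., M_1 be kG-modules and for 1 ≤ i ≤ n-1 let φ_i : (M_n⊗⋯⊗M_{i+1})^G ⊗ (M_i⊗⋯⊗M_1)^G → (M_n⊗⋯⊗M_1)^G be the canonical multiplication maps. Then the map ψ, summing over all partitions p = (n_l,...,n_1) of n the tensor products of chosen spaces of irreducible invariants of the corresponding substrings, is surjective onto (M_n⊗⋯⊗M_1)^G. That is, every invariant in the tensor product is a sum of tensors of irreducible invariants of substrings. -/

import Mathlib

/-!
STATEMENT 1: Every invariant of a tensor product `M_n ⊗ ⋯ ⊗ M_1` of `kG`-modules is a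
sum of tensors of irreducible invariants of consecutive substrings: for any choice of
irreducible invariant subspaces (complements of the composite invariants), the map
`ψ = ⊕_p ψ_p`, summing over all partitions `p` of `n` the multiplication maps on the
chosen irreducible invariant subspaces, is surjective onto `(M_n ⊗ ⋯ ⊗ M_1)^G`.
-/

open scoped TensorProduct DirectSum Classical

section Strings

variable {k G : Type} [Field k] [Group G]
variable (M : ℕ → Type) [∀ i, AddCommGroup (M i)] [∀ i, Module k (M i)]

/-- The string `M_{i+m-1} ⊗ ⋯ ⊗ M_{i+1} ⊗ M_i` (tensor product of `m` consecutive
modules starting at `M_i`). -/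
noncomputable def Str : ℕ → ℕ → ModuleCat k
  | _, 0 => ModuleCat.of k k
  | i, (m + 1) => ModuleCat.of k (↥(Str (i + 1) m) ⊗[k] M i)

/-- Transport along an equality of starting indices. -/
noncomputable def strCast {i j : ℕ} (h : i = j) (m : ℕ) :
    ↥(Str (k := k) M i m) ≃ₗ[k] ↥(Str (k := k) M j m) :=
  h ▸ LinearEquiv.refl k ↥(Str (k := k) M i m)

/-- Transport along an equality of lengths. -/
noncomputable def strCastLen {i m m' : ℕ} (h : m = m') :
    ↥(Str (k := k) M i m) ≃ₗ[k] ↥(Str (k := k) M i m') :=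
  h ▸ LinearEquiv.refl k ↥(Str (k := k) M i m)

/-- The canonical multiplication map
`(M_{i+b+a-1} ⊗ ⋯ ⊗ M_{i+b}) ⊗ (M_{i+b-1} ⊗ ⋯ ⊗ M_i) → M_{i+a+b-1} ⊗ ⋯ ⊗ M_i`. -/
noncomputable def strMul : ∀ (a b i : ℕ),
    ↥(Str (k := k) M (i + b) a) →ₗ[k] ↥(Str (k := k) M i b) →ₗ[k] ↥(Str (k := k) M i (a + b))
  | a, 0, i => (LinearMap.lsmul k ↥(Str (k := k) M i a)).flip
  | a, b + 1, i =>
      (LinearMap.rTensorHom (M i)).comp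
        ((strMul a b (i + 1)).comp
          (strCast (k := k) M (by omega : i + b + 1 = (i + 1) + b) a).toLinearMap)

variable (ρ : ∀ i, Representation k G (M i))

/-- The diagonal action of `g : G` on a string. -/
noncomputable def strAct : ∀ (i m : ℕ) (_ : G), ↥(Str (k := k) M i m) →ₗ[k] ↥(Str (k := k) M i m)
  | _, 0, _ => LinearMap.id
  | i, m + 1, g => TensorProduct.map (strAct (i + 1) m g) (ρ i g)

/-- The invariants `(M_{i+m-1} ⊗ ⋯ ⊗ M_i)^G`. -/
noncomputable def strInv (i m : ℕ) : Submodule k ↥(Str (k := k) M i m) :=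
  ⨅ g : G, LinearMap.eqLocus (strAct M ρ i m g) LinearMap.id

/-- The space of composite invariants: the span of products of invariants of the two
substrings of a proper two-fold partition. -/
noncomputable def strComp (i m : ℕ) : Submodule k ↥(Str (k := k) M i m) :=
  Submodule.span k {x | ∃ a b : ℕ, ∃ h : a + b = m, 0 < a ∧ 0 < b ∧
    ∃ u ∈ strInv M ρ (i + b) a, ∃ w ∈ strInv M ρ i b,
      x = strCastLen M h (strMul M a b i u w)}

/-- Given a choice `Irr` of irreducible invariant subspaces, the tensor product of
the irreducible invariant spaces along a partition `l = [n_1, n_2, …]` (parts read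
from the bottom). -/
noncomputable def TIrr (Irr : ∀ i m : ℕ, Submodule k ↥(Str (k := k) M i m)) :
    ℕ → List ℕ → ModuleCat k
  | _, [] => ModuleCat.of k k
  | i, (a :: l) => ModuleCat.of k (↥(TIrr Irr (i + a) l) ⊗[k] ↥(Irr i a))

/-- The multiplication map from the tensor product of irreducible invariant spaces
along a partition into the full string. -/
noncomputable def iotaT (Irr : ∀ i m : ℕ, Submodule k ↥(Str (k := k) M i m)) :
    ∀ (i : ℕ) (l : List ℕ), ↥(TIrr (k := k) M Irr i l) →ₗ[k] ↥(Str (k := k) M i l.sum)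
  | _, [] => LinearMap.id
  | i, (a :: l) =>
      TensorProduct.lift
        ((((strMul (k := k) M l.sum a i).comp (iotaT Irr (i + a) l)).compl₂
            (Irr i a).subtype).compr₂
          (strCastLen (k := k) M (by omega : l.sum + a = a + l.sum)).toLinearMap)

/-- Partitions of `n` into positive parts. -/
def Pt (n : ℕ) : Type := {l : List ℕ // l.sum = n ∧ ∀ a ∈ l, 0 < a}

/-- The map `ψ = ⊕_p ψ_p` from the direct sum over all partitions of `n` of the
tensor products of irreducible invariant subspaces into the string of length `n`. -/
noncomputable def psiMap (Irr : ∀ i m : ℕ, Submodule k ↥(Str (k := k) M i m)) (n : ℕ) :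
    (⨁ p : Pt n, ↥(TIrr (k := k) M Irr 0 p.1)) →ₗ[k] ↥(Str (k := k) M 0 n) :=
  DirectSum.toModule k _ _ fun p =>
    (strCastLen (k := k) M p.2.1).toLinearMap.comp (iotaT (k := k) M Irr 0 p.1)

end Strings

/-!
Every invariant of length `m > 0` is a composite invariant plus an irreducible one, and a
composite invariant is a sum of products of invariants of strictly shorter strings. So, by
strong induction on `m`, it suffices that the span of the products of irreducible invariants
along partitions contains the irreducible invariants and is closed under the multiplication
maps. Closure holds because the multiplication maps are associative: multiplying two such
products concatenates their partitions.
-/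

namespace DirectSum

theorem range_toModule {R ι N : Type*} [Semiring R] [DecidableEq ι] {M : ι → Type*}
    [∀ i, AddCommMonoid (M i)] [∀ i, Module R (M i)] [AddCommMonoid N] [Module R N]
    (φ : ∀ i, M i →ₗ[R] N) :
    LinearMap.range (toModule R ι N φ) = ⨆ i, LinearMap.range (φ i) := by
  refine le_antisymm ?_ (iSup_le fun i => ?_)
  · rintro _ ⟨x, rfl⟩
    induction x using DirectSum.induction_on with
    | zero => simp
    | of i y => exact Submodule.mem_iSup_of_mem i ⟨y, (toModule_lof R i y).symm⟩
    | add x y hx hy => rw [map_add]; exact Submodule.add_mem _ hx hy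
  · rintro _ ⟨y, rfl⟩
    exact ⟨lof R ι M i y, toModule_lof R i y⟩

end DirectSum

section Strings

variable {k G : Type} [Field k] [Group G]
variable (M : ℕ → Type) [∀ i, AddCommGroup (M i)] [∀ i, Module k (M i)]

theorem strCast_strCast {i j j' : ℕ} (h : i = j) (h' : j = j') (m : ℕ)
    (x : ↥(Str (k := k) M i m)) :
    strCast M h' m (strCast M h m x) = strCast M (h.trans h') m x := by
  subst h h'; rfl

theorem strCast_zero {i j : ℕ} (h : i = j) (x : ↥(Str (k := k) M i 0)) :
    strCast M h 0 x = x := by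
  subst h; rfl

theorem strCastLen_tmul {i m m' : ℕ} (h : m + 1 = m' + 1)
    (x : ↥(Str (k := k) M (i + 1) m)) (v : M i) :
    strCastLen M h (x ⊗ₜ v) = strCastLen M (Nat.succ_injective h) x ⊗ₜ v := by
  obtain rfl : m = m' := Nat.succ_injective h
  rfl

theorem strMul_tmul (a b i : ℕ) (u : ↥(Str (k := k) M (i + (b + 1)) a))
    (x : ↥(Str (k := k) M (i + 1) b)) (v : M i) :
    strMul M a (b + 1) i u (x ⊗ₜ v)
      = strMul M a b (i + 1) (strCast M (by omega) a u) x ⊗ₜ v := rfl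

theorem strCast_strMul {i j : ℕ} (h : i = j) (a b : ℕ)
    (u : ↥(Str (k := k) M (i + b) a)) (w : ↥(Str (k := k) M i b)) :
    strCast M h (a + b) (strMul M a b i u w)
      = strMul M a b j (strCast M (by omega) a u) (strCast M h b w) := by
  subst h; rfl

theorem strMul_strCastLen_right {i a b b' : ℕ} (h : b = b')
    (u : ↥(Str (k := k) M (i + b') a)) (w : ↥(Str (k := k) M i b)) :
    strMul M a b' i u (strCastLen M h w)
      = strCastLen M (by omega) (strMul M a b i (strCast M (by omega) a u) w) := by
  subst h; rfl

theorem strMul_one : ∀ (b i : ℕ) (w : ↥(Str (k := k) M i b)),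
    strMul M 0 b i (show ↥(Str (k := k) M (i + b) 0) from (1 : k)) w
      = strCastLen M (by omega) w
  | 0, _, w => mul_one (show k from w)
  | b + 1, i, w => by
      induction w using TensorProduct.induction_on with
      | zero => erw [map_zero, map_zero]
      | add x y hx hy => erw [map_add, map_add, hx, hy]
      | tmul x v =>
        rw [strMul_tmul, strCast_zero, strMul_one b (i + 1) x, strCastLen_tmul]

theorem strMul_assoc : ∀ (c a b i : ℕ) (u : ↥(Str (k := k) M (i + c + b) a))
    (v : ↥(Str (k := k) M (i + c) b)) (w : ↥(Str (k := k) M i c)),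
    strMul M (a + b) c i (strMul M a b (i + c) u v) w
      = strCastLen M (by omega)
          (strMul M a (b + c) i (strCast M (by omega) a u) (strMul M b c i v w))
  | 0, a, b, i, u, v, w => ((strMul M a b i u).map_smul (show k from w) v).symm
  | c + 1, a, b, i, u, v, w => by
      induction w using TensorProduct.induction_on with
      | zero => erw [map_zero, map_zero]
      | add x y hx hy => erw [map_add, map_add, map_add, map_add, hx, hy]
      | tmul x v' =>
        have h : i + c + 1 = i + 1 + c := by omega
        have e1 : strMul M (a + b) (c + 1) i (strMul M a b (i + (c + 1)) u v) (x ⊗ₜ v')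
            = strMul M (a + b) c (i + 1) (strCast M h (a + b) (strMul M a b (i + c + 1) u v)) x
                ⊗ₜ v' := rfl
        have e2 : strCastLen M (by omega : a + (b + (c + 1)) = a + b + (c + 1))
              (strMul M a (b + (c + 1)) i (strCast M (by omega) a u)
                (strMul M b (c + 1) i v (x ⊗ₜ v')))
            = strCastLen M (by omega : a + (b + c) = a + b + c)
                (strMul M a (b + c) (i + 1)
                  (strCast M (by omega : i + (b + (c + 1)) = i + 1 + (b + c)) a
                    (strCast M (by omega : i + (c + 1) + b = i + (b + (c + 1))) a u))
                  (strMul M b c (i + 1) (strCast M h b v) x)) ⊗ₜ v' :=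
          strCastLen_tmul M _ _ v'
        rw [e1, e2, strCast_strMul M h, strMul_assoc c a b (i + 1), strCast_strCast,
          strCast_strCast]

variable (ρ : ∀ i, Representation k G (M i))

theorem mem_strInv {i m : ℕ} (x : ↥(Str (k := k) M i m)) :
    x ∈ strInv M ρ i m ↔ ∀ g : G, strAct M ρ i m g x = x := by
  simp [strInv, Submodule.mem_iInf, LinearMap.mem_eqLocus]

theorem strAct_strCast {i j : ℕ} (h : i = j) (m : ℕ) (g : G) (x : ↥(Str (k := k) M i m)) :
    strAct M ρ j m g (strCast M h m x) = strCast M h m (strAct M ρ i m g x) := by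
  subst h; rfl

theorem strAct_strMul : ∀ (b a i : ℕ) (g : G) (u : ↥(Str (k := k) M (i + b) a))
    (w : ↥(Str (k := k) M i b)),
    strAct M ρ i (a + b) g (strMul M a b i u w)
      = strMul M a b i (strAct M ρ (i + b) a g u) (strAct M ρ i b g w)
  | 0, a, i, g, u, w => (strAct M ρ i a g).map_smul (show k from w) u
  | b + 1, a, i, g, u, w => by
      induction w using TensorProduct.induction_on with
      | zero => erw [map_zero]
      | add x y hx hy => erw [map_add, map_add, map_add, hx, hy, map_add]
      | tmul x v =>
        have h : i + b + 1 = i + 1 + b := by omega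
        change strAct M ρ (i + 1) (a + b) g (strMul M a b (i + 1) (strCast M h a u) x)
            ⊗ₜ ρ i g v
          = strMul M a b (i + 1) (strCast M h a (strAct M ρ (i + b + 1) a g u))
            (strAct M ρ (i + 1) b g x) ⊗ₜ ρ i g v
        rw [strAct_strMul b a (i + 1) g, strAct_strCast]

theorem strCastLen_mem_strInv {i m m' : ℕ} (h : m = m') {x : ↥(Str (k := k) M i m)}
    (hx : x ∈ strInv M ρ i m) : strCastLen M h x ∈ strInv M ρ i m' := by
  subst h; exact hx

theorem strMul_mem_strInv {a b i : ℕ} {u : ↥(Str (k := k) M (i + b) a)}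
    {w : ↥(Str (k := k) M i b)} (hu : u ∈ strInv M ρ (i + b) a) (hw : w ∈ strInv M ρ i b) :
    strMul M a b i u w ∈ strInv M ρ i (a + b) := by
  rw [mem_strInv] at hu hw ⊢
  intro g
  rw [strAct_strMul, hu g, hw g]

end Strings

section Products

variable {k G : Type} [Field k] [Group G]
variable (M : ℕ → Type) [∀ i, AddCommGroup (M i)] [∀ i, Module k (M i)]
variable (Irr : ∀ i m : ℕ, Submodule k ↥(Str (k := k) M i m))

noncomputable def irrProd (i m : ℕ) : Submodule k ↥(Str (k := k) M i m) :=
  ⨆ p : Pt m, LinearMap.range ((strCastLen M p.2.1).toLinearMap ∘ₗ iotaT M Irr i p.1)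

theorem range_psiMap (n : ℕ) : LinearMap.range (psiMap M Irr n) = irrProd M Irr 0 n :=
  DirectSum.range_toModule _

theorem iotaT_mem_irrProd {i : ℕ} {l : List ℕ} (hl : ∀ a ∈ l, 0 < a)
    (z : ↥(TIrr M Irr i l)) : iotaT M Irr i l z ∈ irrProd M Irr i l.sum :=
  Submodule.mem_iSup_of_mem ⟨l, rfl, hl⟩ ⟨z, rfl⟩

theorem strCastLen_mem_irrProd_iff {i m m' : ℕ} (h : m = m') {x : ↥(Str (k := k) M i m)} :
    strCastLen M h x ∈ irrProd M Irr i m' ↔ x ∈ irrProd M Irr i m := by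
  subst h; rfl

theorem strCast_mem_irrProd {i j m : ℕ} (h : i = j) {x : ↥(Str (k := k) M i m)}
    (hx : x ∈ irrProd M Irr i m) : strCast M h m x ∈ irrProd M Irr j m := by
  subst h; exact hx

theorem strMul_mem_irrProd_of_mem_irr {a c i : ℕ} (ha : 0 < a) {x : ↥(Str (k := k) M (i + a) c)}
    (hx : x ∈ irrProd M Irr (i + a) c) {v : ↥(Str (k := k) M i a)} (hv : v ∈ Irr i a) :
    strMul M c a i x v ∈ irrProd M Irr i (c + a) := by
  refine Submodule.iSup_induction _
    (motive := fun x => strMul M c a i x v ∈ irrProd M Irr i (c + a)) hx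
    (fun ⟨l, hsum, hl⟩ _ hx => ?_) (by simp) fun x y hx hy => ?_
  · subst hsum
    obtain ⟨y, rfl⟩ := hx
    exact (strCastLen_mem_irrProd_iff M Irr (Nat.add_comm l.sum a)).mp
      (iotaT_mem_irrProd M Irr (List.forall_mem_cons.mpr ⟨ha, hl⟩) (y ⊗ₜ ⟨v, hv⟩))
  · rw [map_add, LinearMap.add_apply]
    exact Submodule.add_mem _ hx hy

theorem strMul_iotaT_mem_irrProd : ∀ (p : List ℕ), (∀ a ∈ p, 0 < a) →
    ∀ (c i : ℕ) (u : ↥(Str (k := k) M (i + p.sum) c)), u ∈ irrProd M Irr (i + p.sum) c →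
    ∀ z : ↥(TIrr M Irr i p),
      strMul M c p.sum i u (iotaT M Irr i p z) ∈ irrProd M Irr i (c + p.sum)
  | [], _, _, _, _, hu, z => Submodule.smul_mem _ (show k from z) hu
  | a :: p, hp, c, i, u, hu, z => by
    obtain ⟨ha, hp⟩ := List.forall_mem_cons.mp hp
    change ↥(Str (k := k) M (i + (a + p.sum)) c) at u
    change u ∈ irrProd M Irr (i + (a + p.sum)) c at hu
    suffices z ∈ (irrProd M Irr i _).comap ((strMul M c _ i u).comp (iotaT M Irr i (a :: p))) from
      this
    induction z using TensorProduct.induction_on with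
    | zero => exact zero_mem _
    | add x y hx hy => exact add_mem hx hy
    | tmul y v =>
      have hi : i + (a + p.sum) = i + a + p.sum := by omega
      have key := strMul_mem_irrProd_of_mem_irr M Irr ha
        (strMul_iotaT_mem_irrProd p hp c (i + a) _ (strCast_mem_irrProd M Irr hi hu) y) v.2
      rw [strMul_assoc, strCastLen_mem_irrProd_iff, strCast_strCast] at key
      change strMul M c (a + p.sum) i u (strCastLen M (Nat.add_comm p.sum a)
          (strMul M p.sum a i (iotaT M Irr (i + a) p y) v)) ∈ irrProd M Irr i (c + (a + p.sum))
      rw [strMul_strCastLen_right, strCastLen_mem_irrProd_iff]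
      exact key

theorem strMul_mem_irrProd {a b i : ℕ} {u : ↥(Str (k := k) M (i + b) a)}
    {w : ↥(Str (k := k) M i b)} (hu : u ∈ irrProd M Irr (i + b) a)
    (hw : w ∈ irrProd M Irr i b) : strMul M a b i u w ∈ irrProd M Irr i (a + b) := by
  refine Submodule.iSup_induction _
    (motive := fun w => strMul M a b i u w ∈ irrProd M Irr i (a + b)) hw
    (fun p _ hw => ?_) (by simp) fun x y hx hy => ?_
  · obtain ⟨z, rfl⟩ := hw
    rw [LinearMap.comp_apply, LinearEquiv.coe_coe, strMul_strCastLen_right,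
      strCastLen_mem_irrProd_iff]
    exact strMul_iotaT_mem_irrProd M Irr p.1 p.2.2 a i _ (strCast_mem_irrProd M Irr _ hu) z
  · rw [map_add]
    exact Submodule.add_mem _ hx hy

theorem irr_le_irrProd {i m : ℕ} (hm : 0 < m) : Irr i m ≤ irrProd M Irr i m := by
  intro y hy
  have hunit := iotaT_mem_irrProd M Irr (i := i + m) (l := []) (by simp) (1 : k)
  have key := strMul_mem_irrProd_of_mem_irr M Irr hm hunit hy
  change strMul M 0 m i (show ↥(Str (k := k) M (i + m) 0) from (1 : k)) y
    ∈ irrProd M Irr i (0 + m) at key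
  rwa [strMul_one, strCastLen_mem_irrProd_iff] at key

variable (ρ : ∀ i, Representation k G (M i))

theorem iotaT_mem_strInv (hsub : ∀ i a, 0 < a → Irr i a ≤ strInv M ρ i a) :
    ∀ (l : List ℕ) (i : ℕ), (∀ a ∈ l, 0 < a) →
      ∀ z : ↥(TIrr M Irr i l), iotaT M Irr i l z ∈ strInv M ρ i l.sum
  | [], i, _, z => (mem_strInv M ρ _).mpr fun _ => rfl
  | a :: l, i, hl, z => by
    obtain ⟨ha, hl⟩ := List.forall_mem_cons.mp hl
    suffices z ∈ (strInv M ρ i _).comap (iotaT M Irr i (a :: l)) from this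
    induction z using TensorProduct.induction_on with
    | zero => exact zero_mem _
    | add x y hx hy => exact add_mem hx hy
    | tmul y v =>
      exact strCastLen_mem_strInv M ρ _
        (strMul_mem_strInv M ρ (iotaT_mem_strInv hsub l (i + a) hl y) (hsub i a ha v.2))

theorem irrProd_le_strInv (hsub : ∀ i a, 0 < a → Irr i a ≤ strInv M ρ i a) (i m : ℕ) :
    irrProd M Irr i m ≤ strInv M ρ i m :=
  iSup_le fun p => by
    rintro _ ⟨z, rfl⟩
    exact strCastLen_mem_strInv M ρ _ (iotaT_mem_strInv M Irr ρ hsub p.1 i p.2.2 z)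

theorem strInv_le_irrProd
    (hIrr : ∀ i m : ℕ, 0 < m → strComp M ρ i m ⊔ Irr i m = strInv M ρ i m) (m : ℕ) :
    ∀ i, strInv M ρ i m ≤ irrProd M Irr i m := by
  induction m using Nat.strong_induction_on with
  | _ m ih =>
    intro i
    rcases Nat.eq_zero_or_pos m with rfl | hm
    · intro x _
      exact iotaT_mem_irrProd M Irr (l := []) (by simp) x
    rw [← hIrr i m hm]
    refine sup_le (Submodule.span_le.mpr ?_) (irr_le_irrProd M Irr hm)
    rintro _ ⟨a, b, rfl, ha, hb, u, hu, w, hw, rfl⟩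
    exact (strCastLen_mem_irrProd_iff M Irr _).mpr
      (strMul_mem_irrProd M Irr (ih a (by omega) _ hu) (ih b (by omega) _ hw))

end Products

theorem psi_surjective_onto_invariants
    {k G : Type} [Field k] [Group G]
    (M : ℕ → Type) [∀ i, AddCommGroup (M i)] [∀ i, Module k (M i)]
    (ρ : ∀ i, Representation k G (M i))
    (Irr : ∀ i m : ℕ, Submodule k ↥(Str (k := k) M i m))
    (hIrr : ∀ i m : ℕ, 0 < m →
      strComp M ρ i m ⊓ Irr i m = ⊥ ∧ strComp M ρ i m ⊔ Irr i m = strInv M ρ i m)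
    (n : ℕ) :
    LinearMap.range (psiMap (k := k) M Irr n) = strInv M ρ 0 n := by
  have hsub : ∀ i m, 0 < m → Irr i m ≤ strInv M ρ i m := fun i m hm =>
    (hIrr i m hm).2 ▸ le_sup_right
  rw [range_psiMap]
  exact le_antisymm (irrProd_le_strInv M Irr ρ hsub 0 n)
    (strInv_le_irrProd M Irr ρ (fun i m hm => (hIrr i m hm).2) n 0)
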